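/- arXiv:1404.3815 — 4 statements merged into one kernel-verified Lean document; each statement's English description precedes it below -/
import Mathlib

section
/- Let (Ω, ℱ, μ) be a probability space, (ν_i)_{i∈ℕ} an orthonormal family in L²(μ), and λ, κ ∈ ℓ²(ℕ) real sequences. Let P := Σ_i λ_i·ν_i⊗ν_i and K := Σ_i κ_i·ν_i⊗ν_i, both series converging in L²(μ⊗μ). Then the sequence (λ_iκ_i)_{i∈ℕ} is in ℓ²(ℕ), and for μ⊗μ-almost every (ω,ω'), ∫ P(ω,ξ)·K(ξ,ω') dμ(ξ) = (Σ_i λ_iκ_i·ν_i⊗ν_i)(ω,ω'), i.e., the composition of the two kernels equals Σ_i λ_iκ_i·ν_i⊗ν_i as an element of L²(μ⊗μ). (This yields the paper's lemma that if p̂_t = Σ_i λ_i^t ν_i⊗ν_i then the n-fold kernel composition p̂_{nt} = Σ_i λ_i^{nt} ν_i⊗ν_i, and the Chapman–Kolmogorov property of the limit kernel.) -/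
open MeasureTheory Filter Topology ENNReal

section Aux

variable {Ω : Type*} [MeasurableSpace Ω] {μ : Measure Ω} [IsProbabilityMeasure μ]

private lemma eLp2 {α : Type*} [MeasurableSpace α] (μ' : Measure α) (f : α → ℝ) :
    eLpNorm f 2 μ' = (∫⁻ a, (‖f a‖₊ : ℝ≥0∞) ^ (2 : ℝ) ∂μ') ^ (1 / 2 : ℝ) := by
  rw [eLpNorm_eq_lintegral_rpow_enorm_toReal two_ne_zero (by norm_num)]
  norm_num [enorm_eq_nnnorm]

private lemma int_mul {f g : Ω → ℝ} (hf : MemLp f 2 μ) (hg : MemLp g 2 μ) :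
    Integrable (fun ξ => f ξ * g ξ) μ := by
  have h : MemLp (f • g) 1 μ := hg.smul hf
  rw [memLp_one_iff_integrable] at h
  exact h

private lemma qmp1 : Measure.QuasiMeasurePreserving
    (fun p : (Ω × Ω) × Ω => (p.1.1, p.2)) ((μ.prod μ).prod μ) (μ.prod μ) := by
  have hmap : Measure.map (Prod.map (Prod.fst : Ω × Ω → Ω) (id : Ω → Ω)) ((μ.prod μ).prod μ)
      = μ.prod μ := by
    rw [← Measure.map_prod_map _ _ measurable_fst measurable_id]
    simp
  refine ⟨(measurable_fst.fst).prodMk measurable_snd, ?_⟩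
  rw [show (fun p : (Ω × Ω) × Ω => (p.1.1, p.2))
      = Prod.map (Prod.fst : Ω × Ω → Ω) (id : Ω → Ω) from rfl, hmap]

private lemma qmp2 : Measure.QuasiMeasurePreserving
    (fun p : (Ω × Ω) × Ω => (p.2, p.1.2)) ((μ.prod μ).prod μ) (μ.prod μ) := by
  have h1 : Measure.QuasiMeasurePreserving (Prod.map (Prod.snd : Ω × Ω → Ω) (id : Ω → Ω))
      ((μ.prod μ).prod μ) (μ.prod μ) := by
    have hmap : Measure.map (Prod.map (Prod.snd : Ω × Ω → Ω) (id : Ω → Ω)) ((μ.prod μ).prod μ)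
        = μ.prod μ := by
      rw [← Measure.map_prod_map _ _ measurable_snd measurable_id]
      simp
    exact ⟨(measurable_fst.snd).prodMk measurable_snd, by rw [hmap]⟩
  have h2 := (Measure.measurePreserving_swap (μ := μ) (ν := μ)).quasiMeasurePreserving.comp h1
  exact h2

private lemma comp_aesm {F G : Ω × Ω → ℝ}
    (hF : AEStronglyMeasurable F (μ.prod μ)) (hG : AEStronglyMeasurable G (μ.prod μ)) :
    AEStronglyMeasurable (fun z : Ω × Ω => ∫ ξ, F (z.1, ξ) * G (ξ, z.2) ∂μ) (μ.prod μ) := by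
  have h1 : AEStronglyMeasurable (fun p : (Ω × Ω) × Ω => F (p.1.1, p.2)) ((μ.prod μ).prod μ) :=
    hF.comp_quasiMeasurePreserving qmp1
  have h2 : AEStronglyMeasurable (fun p : (Ω × Ω) × Ω => G (p.2, p.1.2)) ((μ.prod μ).prod μ) :=
    hG.comp_quasiMeasurePreserving qmp2
  exact (h1.mul h2).integral_prod_right'

private lemma aem_lintegral_right {H : Ω × Ω → ℝ≥0∞} (hH : AEMeasurable H (μ.prod μ)) :
    AEMeasurable (fun ω => ∫⁻ ξ, H (ω, ξ) ∂μ) μ := by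
  refine ⟨fun ω => ∫⁻ ξ, hH.mk H (ω, ξ) ∂μ, hH.measurable_mk.lintegral_prod_right', ?_⟩
  filter_upwards [Measure.ae_ae_of_ae_prod hH.ae_eq_mk] with ω hω using lintegral_congr_ae hω

private lemma comp_eLpNorm_le {F G : Ω × Ω → ℝ}
    (hF : AEStronglyMeasurable F (μ.prod μ)) (hG : AEStronglyMeasurable G (μ.prod μ)) :
    eLpNorm (fun z : Ω × Ω => ∫ ξ, F (z.1, ξ) * G (ξ, z.2) ∂μ) 2 (μ.prod μ)
      ≤ eLpNorm F 2 (μ.prod μ) * eLpNorm G 2 (μ.prod μ) := by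
  have hFe : AEMeasurable (fun z : Ω × Ω => (‖F z‖₊ : ℝ≥0∞) ^ (2 : ℝ)) (μ.prod μ) :=
    hF.enorm.pow_const _
  have hGe : AEMeasurable (fun z : Ω × Ω => (‖G z‖₊ : ℝ≥0∞) ^ (2 : ℝ)) (μ.prod μ) :=
    hG.enorm.pow_const _
  have hGe' : AEMeasurable (fun z : Ω × Ω => (‖G z.swap‖₊ : ℝ≥0∞) ^ (2 : ℝ)) (μ.prod μ) :=
    hGe.comp_quasiMeasurePreserving
      (Measure.measurePreserving_swap (μ := μ) (ν := μ)).quasiMeasurePreserving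
  set f : Ω → ℝ≥0∞ := fun ω => ∫⁻ ξ, (‖F (ω, ξ)‖₊ : ℝ≥0∞) ^ (2 : ℝ) ∂μ with hf_def
  set g : Ω → ℝ≥0∞ := fun ω' => ∫⁻ ξ, (‖G (ξ, ω')‖₊ : ℝ≥0∞) ^ (2 : ℝ) ∂μ with hg_def
  have hfm : AEMeasurable f μ := aem_lintegral_right hFe
  have hgm : AEMeasurable g μ := aem_lintegral_right hGe'
  have hae1 : ∀ᵐ ω ∂μ, AEStronglyMeasurable (fun ξ => F (ω, ξ)) μ := hF.prodMk_left
  have hae2 : ∀ᵐ ω' ∂μ, AEStronglyMeasurable (fun ξ => G (ξ, ω')) μ := by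
    have hGs : AEStronglyMeasurable (fun z : Ω × Ω => G z.swap) (μ.prod μ) :=
      hG.comp_quasiMeasurePreserving
        (Measure.measurePreserving_swap (μ := μ) (ν := μ)).quasiMeasurePreserving
    exact hGs.prodMk_left
  have key : ∀ᵐ z ∂(μ.prod μ),
      (‖∫ ξ, F (z.1, ξ) * G (ξ, z.2) ∂μ‖₊ : ℝ≥0∞) ^ (2 : ℝ) ≤ f z.1 * g z.2 := by
    filter_upwards [Measure.quasiMeasurePreserving_fst.ae hae1,
      Measure.quasiMeasurePreserving_snd.ae hae2] with z h1 h2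
    have step1 : (‖∫ ξ, F (z.1, ξ) * G (ξ, z.2) ∂μ‖₊ : ℝ≥0∞)
        ≤ ∫⁻ ξ, (‖F (z.1, ξ)‖₊ : ℝ≥0∞) * (‖G (ξ, z.2)‖₊ : ℝ≥0∞) ∂μ := by
      refine (enorm_integral_le_lintegral_enorm _).trans_eq ?_
      simp_rw [enorm_eq_nnnorm, nnnorm_mul, ENNReal.coe_mul]
    have step2 : ∫⁻ ξ, (‖F (z.1, ξ)‖₊ : ℝ≥0∞) * (‖G (ξ, z.2)‖₊ : ℝ≥0∞) ∂μ
        ≤ f z.1 ^ (1 / 2 : ℝ) * g z.2 ^ (1 / 2 : ℝ) := by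
      exact ENNReal.lintegral_mul_le_Lp_mul_Lq μ
        Real.HolderConjugate.two_two
        h1.enorm h2.enorm
    calc ((‖∫ ξ, F (z.1, ξ) * G (ξ, z.2) ∂μ‖₊ : ℝ≥0∞)) ^ (2 : ℝ)
        ≤ (f z.1 ^ (1 / 2 : ℝ) * g z.2 ^ (1 / 2 : ℝ)) ^ (2 : ℝ) :=
          ENNReal.rpow_le_rpow (step1.trans step2) (by norm_num)
      _ = f z.1 * g z.2 := by
          rw [ENNReal.mul_rpow_of_nonneg _ _ (by norm_num : (0:ℝ) ≤ 2),
            ← ENNReal.rpow_mul, ← ENNReal.rpow_mul]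
          norm_num
  rw [eLp2, eLp2, eLp2, ← ENNReal.mul_rpow_of_nonneg _ _ (by norm_num : (0:ℝ) ≤ 1/2)]
  refine ENNReal.rpow_le_rpow ?_ (by norm_num)
  calc ∫⁻ z, (‖∫ ξ, F (z.1, ξ) * G (ξ, z.2) ∂μ‖₊ : ℝ≥0∞) ^ (2 : ℝ) ∂(μ.prod μ)
      ≤ ∫⁻ z, f z.1 * g z.2 ∂(μ.prod μ) := lintegral_mono_ae key
    _ = (∫⁻ ω, f ω ∂μ) * ∫⁻ ω', g ω' ∂μ := lintegral_prod_mul hfm hgm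
    _ = (∫⁻ z, (‖F z‖₊ : ℝ≥0∞) ^ (2 : ℝ) ∂(μ.prod μ))
        * ∫⁻ z, (‖G z‖₊ : ℝ≥0∞) ^ (2 : ℝ) ∂(μ.prod μ) := by
        rw [lintegral_prod _ hFe, lintegral_prod_symm _ hGe]

private lemma mem_slice_left {F : Ω × Ω → ℝ} (hF : MemLp F 2 (μ.prod μ)) :
    ∀ᵐ ω ∂μ, MemLp (fun ξ => F (ω, ξ)) 2 μ := by
  have hFe : AEMeasurable (fun z : Ω × Ω => (‖F z‖₊ : ℝ≥0∞) ^ (2 : ℝ)) (μ.prod μ) :=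
    hF.1.enorm.pow_const _
  have hfin : ∫⁻ z, (‖F z‖₊ : ℝ≥0∞) ^ (2 : ℝ) ∂(μ.prod μ) ≠ ∞ := by
    have h2 := hF.2
    rw [eLp2] at h2
    exact ((ENNReal.rpow_lt_top_iff_of_pos (by norm_num : (0:ℝ) < 1/2)).mp h2).ne
  rw [lintegral_prod _ hFe] at hfin
  have h2 := ae_lt_top' (aem_lintegral_right hFe) hfin
  filter_upwards [hF.1.prodMk_left, h2] with ω h1 hlt
  refine ⟨h1, ?_⟩
  rw [eLp2]
  exact ENNReal.rpow_lt_top_of_nonneg (by norm_num) hlt.ne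

private lemma mem_slice_right {F : Ω × Ω → ℝ} (hF : MemLp F 2 (μ.prod μ)) :
    ∀ᵐ ω' ∂μ, MemLp (fun ξ => F (ξ, ω')) 2 μ := by
  have hFs : MemLp (fun z : Ω × Ω => F z.swap) 2 (μ.prod μ) :=
    hF.comp_measurePreserving (Measure.measurePreserving_swap (μ := μ) (ν := μ))
  exact mem_slice_left hFs

end Aux

set_option maxHeartbeats 1000000

/-- If `P = Σ_i λ_i ν_i⊗ν_i` and `K = Σ_i κ_i ν_i⊗ν_i` (series converging
in `L²(μ⊗μ)`, `(ν_i)` orthonormal, `λ, κ ∈ ℓ²`), then `(λ_iκ_i) ∈ ℓ²` and the composition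
`∫ P(ω,ξ)K(ξ,ω') dμ(ξ)` equals `Σ_i λ_iκ_i ν_i⊗ν_i` a.e., as an element of `L²(μ⊗μ)`. -/
theorem composition_of_diagonal_kernels
    {Ω : Type*} [MeasurableSpace Ω] (μ : Measure Ω) [IsProbabilityMeasure μ]
    (ν : ℕ → Ω → ℝ) (hν : ∀ i, MemLp (ν i) 2 μ)
    (hortho : ∀ i j, ∫ ω, ν i ω * ν j ω ∂μ = if i = j then 1 else 0)
    (lam kap : ℕ → ℝ)
    (hlam : Summable (fun i => (lam i) ^ 2)) (hkap : Summable (fun i => (kap i) ^ 2))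
    (P K : Ω × Ω → ℝ) (hP : MemLp P 2 (μ.prod μ)) (hK : MemLp K 2 (μ.prod μ))
    (hPlim : Tendsto
      (fun n => eLpNorm
        (fun z => P z - ∑ i ∈ Finset.range n, lam i * ν i z.1 * ν i z.2) 2 (μ.prod μ))
      atTop (𝓝 0))
    (hKlim : Tendsto
      (fun n => eLpNorm
        (fun z => K z - ∑ i ∈ Finset.range n, kap i * ν i z.1 * ν i z.2) 2 (μ.prod μ))
      atTop (𝓝 0)) :
    Summable (fun i => (lam i * kap i) ^ 2) ∧
    ∃ S : Ω × Ω → ℝ, MemLp S 2 (μ.prod μ) ∧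
      Tendsto
        (fun n => eLpNorm
          (fun z => S z - ∑ i ∈ Finset.range n, (lam i * kap i) * ν i z.1 * ν i z.2) 2
          (μ.prod μ))
        atTop (𝓝 0) ∧
      ∀ᵐ z ∂(μ.prod μ), ∫ ξ, P (z.1, ξ) * K (ξ, z.2) ∂μ = S z := by
  constructor
  · -- ℓ² of the product sequence
    refine Summable.of_nonneg_of_le (fun i => sq_nonneg _)
      (fun i => ?_) (hkap.mul_left (∑' i, lam i ^ 2))
    have h1 : lam i ^ 2 ≤ ∑' i, lam i ^ 2 := Summable.le_tsum hlam i fun j _ => sq_nonneg _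
    calc (lam i * kap i) ^ 2 = lam i ^ 2 * kap i ^ 2 := by ring
      _ ≤ (∑' i, lam i ^ 2) * kap i ^ 2 :=
        mul_le_mul_of_nonneg_right h1 (sq_nonneg _)
  · -- the composed kernel
    set S : Ω × Ω → ℝ := fun z => ∫ ξ, P (z.1, ξ) * K (ξ, z.2) ∂μ with hS_def
    -- partial sum kernels
    set Pn : ℕ → Ω × Ω → ℝ :=
      fun n z => ∑ i ∈ Finset.range n, lam i * ν i z.1 * ν i z.2 with hPn_def
    set Kn : ℕ → Ω × Ω → ℝ :=
      fun n z => ∑ i ∈ Finset.range n, kap i * ν i z.1 * ν i z.2 with hKn_def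
    set Sn : ℕ → Ω × Ω → ℝ :=
      fun n z => ∑ i ∈ Finset.range n, (lam i * kap i) * ν i z.1 * ν i z.2 with hSn_def
    have hνfst : ∀ i, AEStronglyMeasurable (fun z : Ω × Ω => ν i z.1) (μ.prod μ) := fun i =>
      (hν i).1.comp_quasiMeasurePreserving Measure.quasiMeasurePreserving_fst
    have hνsnd : ∀ i, AEStronglyMeasurable (fun z : Ω × Ω => ν i z.2) (μ.prod μ) := fun i =>
      (hν i).1.comp_quasiMeasurePreserving Measure.quasiMeasurePreserving_snd
    have hPnm : ∀ n, AEStronglyMeasurable (Pn n) (μ.prod μ) := by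
      intro n
      refine Finset.aestronglyMeasurable_fun_sum _ (fun i _ => ?_)
      exact (((hνfst i).const_mul (lam i)).mul (hνsnd i))
    have hKnm : ∀ n, AEStronglyMeasurable (Kn n) (μ.prod μ) := by
      intro n
      refine Finset.aestronglyMeasurable_fun_sum _ (fun i _ => ?_)
      exact (((hνfst i).const_mul (kap i)).mul (hνsnd i))
    have hSm : AEStronglyMeasurable S (μ.prod μ) := comp_aesm (F := P) (G := K) hP.1 hK.1
    have hSnorm : eLpNorm S 2 (μ.prod μ) ≤ eLpNorm P 2 (μ.prod μ) * eLpNorm K 2 (μ.prod μ) :=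
      comp_eLpNorm_le (F := P) (G := K) hP.1 hK.1
    have hSmem : MemLp S 2 (μ.prod μ) :=
      ⟨hSm, hSnorm.trans_lt (ENNReal.mul_lt_top hP.2 hK.2)⟩
    -- exact composition of the partial sums
    have hfin : ∀ n (ω ω' : Ω),
        ∫ ξ, Pn n (ω, ξ) * Kn n (ξ, ω') ∂μ = Sn n (ω, ω') := by
      intro n ω ω'
      have hint : ∀ i j : ℕ, Integrable
          (fun ξ => (lam i * ν i ω) * (kap j * ν j ω') * (ν i ξ * ν j ξ)) μ :=
        fun i j => ((int_mul (hν i) (hν j)).const_mul _)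
      have hrw : (fun ξ => Pn n (ω, ξ) * Kn n (ξ, ω'))
          = fun ξ => ∑ i ∈ Finset.range n, ∑ j ∈ Finset.range n,
            (lam i * ν i ω) * (kap j * ν j ω') * (ν i ξ * ν j ξ) := by
        funext ξ
        simp only [hPn_def, hKn_def, Finset.sum_mul_sum]
        refine Finset.sum_congr rfl fun i _ => Finset.sum_congr rfl fun j _ => by ring
      rw [hrw]
      rw [integral_finset_sum _ (fun i _ => integrable_finset_sum _ (fun j _ => hint i j))]
      have : ∀ i ∈ Finset.range n,
          ∫ ξ, ∑ j ∈ Finset.range n,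
            (lam i * ν i ω) * (kap j * ν j ω') * (ν i ξ * ν j ξ) ∂μ
          = (lam i * kap i) * ν i ω * ν i ω' := by
        intro i hi
        rw [integral_finset_sum _ (fun j _ => hint i j)]
        have hterm : ∀ j ∈ Finset.range n,
            ∫ ξ, (lam i * ν i ω) * (kap j * ν j ω') * (ν i ξ * ν j ξ) ∂μ
            = (lam i * ν i ω) * (kap j * ν j ω') * (if i = j then 1 else 0) := by
          intro j _
          rw [integral_const_mul, hortho i j]
        rw [Finset.sum_congr rfl hterm]
        simp only [mul_ite, mul_one, mul_zero]
        rw [Finset.sum_ite_eq (Finset.range n) i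
          (fun j => (lam i * ν i ω) * (kap j * ν j ω'))]
        simp only [hi, if_true]
        ring
      rw [Finset.sum_congr rfl this]
    -- slices of P and K
    have hPslice : ∀ᵐ z ∂(μ.prod μ), MemLp (fun ξ => P (z.1, ξ)) 2 μ :=
      Measure.quasiMeasurePreserving_fst.ae (mem_slice_left hP)
    have hKslice : ∀ᵐ z ∂(μ.prod μ), MemLp (fun ξ => K (ξ, z.2)) 2 μ :=
      Measure.quasiMeasurePreserving_snd.ae (mem_slice_right hK)
    -- slices of the partial sums are in L² everywhere
    have hPnslice : ∀ n (ω : Ω), MemLp (fun ξ => Pn n (ω, ξ)) 2 μ := by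
      intro n ω
      have hq : (fun ξ => Pn n (ω, ξ))
          = fun ξ => ∑ i ∈ Finset.range n, (lam i * ν i ω) * ν i ξ := by
        funext ξ
        simp only [hPn_def]
      rw [hq]
      exact memLp_finsetSum _ (fun i _ => (hν i).const_mul _)
    have hKnslice : ∀ n (ω' : Ω), MemLp (fun ξ => Kn n (ξ, ω')) 2 μ := by
      intro n ω'
      have hq : (fun ξ => Kn n (ξ, ω'))
          = fun ξ => ∑ i ∈ Finset.range n, (kap i * ν i ω') * ν i ξ := by
        funext ξ
        simp only [hKn_def]
        exact Finset.sum_congr rfl fun i _ => by ring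
      rw [hq]
      exact memLp_finsetSum _ (fun i _ => (hν i).const_mul _)
    -- a.e. decomposition of the error
    have hdec : ∀ n, (fun z => S z - Sn n z) =ᵐ[μ.prod μ]
        (fun z : Ω × Ω => (∫ ξ, (P (z.1, ξ) - Pn n (z.1, ξ)) * K (ξ, z.2) ∂μ)
          + ∫ ξ, Pn n (z.1, ξ) * (K (ξ, z.2) - Kn n (ξ, z.2)) ∂μ) := by
      intro n
      filter_upwards [hPslice, hKslice] with z hz1 hz2
      have hPK : Integrable (fun ξ => P (z.1, ξ) * K (ξ, z.2)) μ := int_mul hz1 hz2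
      have hPnK : Integrable (fun ξ => Pn n (z.1, ξ) * K (ξ, z.2)) μ :=
        int_mul (hPnslice n z.1) hz2
      have hPnKn : Integrable (fun ξ => Pn n (z.1, ξ) * Kn n (ξ, z.2)) μ :=
        int_mul (hPnslice n z.1) (hKnslice n z.2)
      have e1 : ∫ ξ, (P (z.1, ξ) - Pn n (z.1, ξ)) * K (ξ, z.2) ∂μ
          = (∫ ξ, P (z.1, ξ) * K (ξ, z.2) ∂μ) - ∫ ξ, Pn n (z.1, ξ) * K (ξ, z.2) ∂μ := by
        simp_rw [sub_mul]
        exact integral_sub hPK hPnK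
      have e2 : ∫ ξ, Pn n (z.1, ξ) * (K (ξ, z.2) - Kn n (ξ, z.2)) ∂μ
          = (∫ ξ, Pn n (z.1, ξ) * K (ξ, z.2) ∂μ) - ∫ ξ, Pn n (z.1, ξ) * Kn n (ξ, z.2) ∂μ := by
        simp_rw [mul_sub]
        exact integral_sub hPnK hPnKn
      have e3 : ∫ ξ, Pn n (z.1, ξ) * Kn n (ξ, z.2) ∂μ = Sn n z := by
        rw [hfin n z.1 z.2]
      rw [e1, e2, e3]
      ring
    -- bounding the error
    have herr : ∀ n, eLpNorm (fun z => S z - Sn n z) 2 (μ.prod μ)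
        ≤ eLpNorm (fun z => P z - Pn n z) 2 (μ.prod μ) * eLpNorm K 2 (μ.prod μ)
          + eLpNorm (Pn n) 2 (μ.prod μ) * eLpNorm (fun z => K z - Kn n z) 2 (μ.prod μ) := by
      intro n
      rw [eLpNorm_congr_ae (hdec n)]
      have hm1 : AEStronglyMeasurable
          (fun z : Ω × Ω => ∫ ξ, (P (z.1, ξ) - Pn n (z.1, ξ)) * K (ξ, z.2) ∂μ) (μ.prod μ) :=
        comp_aesm (F := fun z => P z - Pn n z) (G := K) (hP.1.sub (hPnm n)) hK.1
      have hm2 : AEStronglyMeasurable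
          (fun z : Ω × Ω => ∫ ξ, Pn n (z.1, ξ) * (K (ξ, z.2) - Kn n (ξ, z.2)) ∂μ) (μ.prod μ) :=
        comp_aesm (F := Pn n) (G := fun z => K z - Kn n z) (hPnm n) (hK.1.sub (hKnm n))
      refine (eLpNorm_add_le hm1 hm2 one_le_two).trans ?_
      gcongr
      · exact comp_eLpNorm_le (F := fun z => P z - Pn n z) (G := K) (hP.1.sub (hPnm n)) hK.1
      · exact comp_eLpNorm_le (F := Pn n) (G := fun z => K z - Kn n z) (hPnm n) (hK.1.sub (hKnm n))
    -- the bound tends to zero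
    have hPn_bdd : ∀ n, eLpNorm (Pn n) 2 (μ.prod μ)
        ≤ eLpNorm (fun z => P z - Pn n z) 2 (μ.prod μ) + eLpNorm P 2 (μ.prod μ) := by
      intro n
      have h0 : eLpNorm (Pn n) 2 (μ.prod μ)
          = eLpNorm (fun z => (Pn n z - P z) + P z) 2 (μ.prod μ) := by
        apply eLpNorm_congr_ae
        filter_upwards with z
        ring
      rw [h0]
      refine (eLpNorm_add_le ((hPnm n).sub hP.1) hP.1 one_le_two).trans ?_
      gcongr
      exact le_of_eq (eLpNorm_sub_comm (Pn n) P 2 (μ.prod μ))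
    have hbound : Tendsto (fun n =>
        eLpNorm (fun z => P z - Pn n z) 2 (μ.prod μ) * eLpNorm K 2 (μ.prod μ)
          + (eLpNorm (fun z => P z - Pn n z) 2 (μ.prod μ) + eLpNorm P 2 (μ.prod μ))
            * eLpNorm (fun z => K z - Kn n z) 2 (μ.prod μ)) atTop (𝓝 0) := by
      have h1 : Tendsto (fun n =>
          eLpNorm (fun z => P z - Pn n z) 2 (μ.prod μ) * eLpNorm K 2 (μ.prod μ))
          atTop (𝓝 0) := by
        have h0 := ENNReal.Tendsto.mul_const hPlim (Or.inr hK.2.ne)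
        simpa using h0
      have h2 : Tendsto (fun n =>
          (eLpNorm (fun z => P z - Pn n z) 2 (μ.prod μ) + eLpNorm P 2 (μ.prod μ))
            * eLpNorm (fun z => K z - Kn n z) 2 (μ.prod μ)) atTop (𝓝 0) := by
        have hsum : Tendsto (fun n =>
            eLpNorm (fun z => P z - Pn n z) 2 (μ.prod μ) + eLpNorm P 2 (μ.prod μ))
            atTop (𝓝 (eLpNorm P 2 (μ.prod μ))) := by
          simpa using hPlim.add_const (eLpNorm P 2 (μ.prod μ))
        have h0 := ENNReal.Tendsto.mul hsum (Or.inr ENNReal.zero_ne_top) hKlim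
          (Or.inr hP.2.ne)
        simpa using h0
      simpa using h1.add h2
    have hStendsto : Tendsto
        (fun n => eLpNorm (fun z => S z - Sn n z) 2 (μ.prod μ)) atTop (𝓝 0) := by
      refine tendsto_of_tendsto_of_tendsto_of_le_of_le tendsto_const_nhds hbound
        (fun n => zero_le) (fun n => ?_)
      refine (herr n).trans ?_
      gcongr
      exact hPn_bdd n
    exact ⟨S, hSmem, hStendsto, Eventually.of_forall fun z => rfl⟩
end

section
/- Let (Ω, ℱ, μ) be a probability space and (ν_i)_{i∈ℕ} an orthonormal family in L²(μ) with ν₀ = 1 μ-almost everywhere. Let λ ∈ ℓ²(ℕ) be a real sequence with λ₀ = 1, and let p := Σ_i λ_i·ν_i⊗ν_i ∈ L²(μ⊗μ) (the series converging in L²(μ⊗μ)). Then for μ-almost every ω, the slice p(ω,·) is μ-integrable and ∫ p(ω,ω') dμ(ω') = 1. (Stochasticity of the limit kernel constructed from eigenvectors.) -/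
open MeasureTheory Filter Topology ENNReal

/-- (Stochasticity of the limit kernel.)  Let `(ν_i)` be orthonormal in
`L²(μ)` with `ν₀ = 1` a.e., and `λ ∈ ℓ²` with `λ₀ = 1`.  If `p = Σ_i λ_i ν_i⊗ν_i` (series
converging in `L²(μ⊗μ)`), then for μ-a.e. `ω` the slice `p(ω,·)` is integrable with
`∫ p(ω,ω') dμ(ω') = 1`. -/
theorem limit_kernel_stochastic
    {Ω : Type*} [MeasurableSpace Ω] (μ : Measure Ω) [IsProbabilityMeasure μ]
    (ν : ℕ → Ω → ℝ) (hν : ∀ i, MemLp (ν i) 2 μ)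
    (hortho : ∀ i j, ∫ ω, ν i ω * ν j ω ∂μ = if i = j then 1 else 0)
    (hν0 : ν 0 =ᵐ[μ] fun _ => 1)
    (lam : ℕ → ℝ) (hlam : Summable (fun i => (lam i) ^ 2)) (hlam0 : lam 0 = 1)
    (p : Ω × Ω → ℝ) (hp : MemLp p 2 (μ.prod μ))
    (hplim : Tendsto
      (fun n => eLpNorm
        (fun z => p z - ∑ i ∈ Finset.range n, lam i * ν i z.1 * ν i z.2) 2 (μ.prod μ))
      atTop (𝓝 0)) :
    ∀ᵐ ω ∂μ, Integrable (fun ω' => p (ω, ω')) μ ∧ ∫ ω', p (ω, ω') ∂μ = 1 := by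
  have hint : Integrable p (μ.prod μ) := hp.integrable one_le_two
  have hslice : ∀ᵐ ω ∂μ, Integrable (fun ω' => p (ω, ω')) μ := hint.prod_right_ae
  have hνint : ∀ i, Integrable (ν i) μ := fun i => (hν i).integrable one_le_two
  have hνmean : ∀ i, ∫ ω, ν i ω ∂μ = if i = 0 then 1 else 0 := by
    intro i
    rw [← hortho i 0]
    refine integral_congr_ae ?_
    filter_upwards [hν0] with ω h
    rw [h]; ring
  set F : Ω → ℝ := fun ω => ∫ ω', p (ω, ω') ∂μ with hF
  have hFint : Integrable F μ := hint.integral_prod_left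
  have key : ∀ n (ω : Ω), ∫ ω', ∑ i ∈ Finset.range n, lam i * ν i ω * ν i ω' ∂μ
      = ∑ i ∈ Finset.range n, lam i * ν i ω * (if i = 0 then 1 else 0) := by
    intro n ω
    rw [integral_finset_sum _ (fun i _ => (hνint i).const_mul _)]
    exact Finset.sum_congr rfl fun i _ => by rw [integral_const_mul _ _, hνmean]
  have hbound : ∀ n, 1 ≤ n →
      (∫⁻ ω, (‖F ω - 1‖₊ : ℝ≥0∞) ∂μ) ≤ eLpNorm
        (fun z => p z - ∑ i ∈ Finset.range n, lam i * ν i z.1 * ν i z.2) 2 (μ.prod μ) := by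
    intro n hn
    set g : Ω × Ω → ℝ := fun z => p z - ∑ i ∈ Finset.range n, lam i * ν i z.1 * ν i z.2
      with hg
    have hgm : AEStronglyMeasurable g (μ.prod μ) := by
      refine hp.aestronglyMeasurable.sub ?_
      refine Finset.aestronglyMeasurable_fun_sum _ fun i _ => ?_
      exact (aestronglyMeasurable_const.mul ((hν i).aestronglyMeasurable.comp_fst)).mul
        ((hν i).aestronglyMeasurable.comp_snd)
    have hq : ∀ ω : Ω, Integrable (fun ω' => ∑ i ∈ Finset.range n, lam i * ν i ω * ν i ω') μ :=
      fun ω => integrable_finset_sum _ fun i _ => (hνint i).const_mul _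
    have hae : ∀ᵐ ω ∂μ, (‖F ω - 1‖₊ : ℝ≥0∞) ≤ ∫⁻ ω', (‖g (ω, ω')‖₊ : ℝ≥0∞) ∂μ := by
      filter_upwards [hslice, hν0] with ω hsl hν0ω
      have hsum : ∑ i ∈ Finset.range n, lam i * ν i ω * (if i = 0 then 1 else 0) = 1 := by
        rw [Finset.sum_eq_single 0]
        · simp [hlam0, hν0ω]
        · intro b _ hb; simp [hb]
        · intro h; exact absurd (Finset.mem_range.2 hn) h
      have heq : F ω - 1 = ∫ ω', g (ω, ω') ∂μ := by
        rw [hg]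
        rw [integral_sub hsl (hq ω), key n ω, hsum]
      rw [heq]
      exact enorm_integral_le_lintegral_enorm _
    calc (∫⁻ ω, (‖F ω - 1‖₊ : ℝ≥0∞) ∂μ)
        ≤ ∫⁻ ω, ∫⁻ ω', (‖g (ω, ω')‖₊ : ℝ≥0∞) ∂μ ∂μ := lintegral_mono_ae hae
      _ = ∫⁻ z, (‖g z‖₊ : ℝ≥0∞) ∂(μ.prod μ) := (lintegral_prod _ hgm.enorm).symm
      _ = eLpNorm g 1 (μ.prod μ) := (eLpNorm_one_eq_lintegral_enorm (f := g)).symm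
      _ ≤ eLpNorm g 2 (μ.prod μ) := eLpNorm_le_eLpNorm_of_exponent_le one_le_two hgm
  have hzero : (∫⁻ ω, (‖F ω - 1‖₊ : ℝ≥0∞) ∂μ) = 0 := by
    refine le_antisymm ?_ zero_le
    refine ge_of_tendsto hplim ?_
    filter_upwards [eventually_ge_atTop 1] with n hn using hbound n hn
  have hFone : ∀ᵐ ω ∂μ, F ω = 1 := by
    have hm : AEMeasurable (fun ω => (‖F ω - 1‖₊ : ℝ≥0∞)) μ :=
      (hFint.aestronglyMeasurable.sub aestronglyMeasurable_const).enorm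
    have h0 := (lintegral_eq_zero_iff' hm).mp hzero
    filter_upwards [h0] with ω h
    have : F ω - 1 = 0 := by simpa using h
    linarith
  filter_upwards [hslice, hFone] with ω h1 h2
  exact ⟨h1, h2⟩
end

section
/- Let B > 0 and for each n ∈ ℕ let λ⁽ⁿ⁾ : ℕ → [0,1] be a nonincreasing sequence (λ⁽ⁿ⁾_i ≥ λ⁽ⁿ⁾_{i+1}) such that Σ_i λ⁽ⁿ⁾_i = 2 and Σ_i √(λ⁽ⁿ⁾_i) ≤ B. Suppose λ : ℕ → ℝ satisfies λ_i = lim_{n→∞} λ⁽ⁿ⁾_i for every i. Then Σ_i λ_i = 2. (This is the key step in showing that the normalization G(1) = 2 passes to the limit of a bounded sequence of Markov chains: no eigenvalue mass escapes.) -/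
open Filter Topology

/-- (No eigenvalue mass escapes in the limit.)  Suppose for each `n`,
`λ⁽ⁿ⁾ : ℕ → [0,1]` is nonincreasing with `Σ_i λ⁽ⁿ⁾_i = 2` and `Σ_i √(λ⁽ⁿ⁾_i) ≤ B`, and
`λ_i = lim_n λ⁽ⁿ⁾_i` for every `i`.  Then `Σ_i λ_i = 2`. -/
theorem eigenvalue_mass_preserved
    (B : ℝ) (hB : 0 < B) (lamn : ℕ → ℕ → ℝ)
    (hnonneg : ∀ n i, 0 ≤ lamn n i) (hle1 : ∀ n i, lamn n i ≤ 1)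
    (hanti : ∀ n, Antitone (lamn n))
    (hsum2 : ∀ n, HasSum (lamn n) 2)
    (hsqrt_summable : ∀ n, Summable (fun i => Real.sqrt (lamn n i)))
    (hsqrt_bound : ∀ n, ∑' i, Real.sqrt (lamn n i) ≤ B)
    (lam : ℕ → ℝ) (hlim : ∀ i, Tendsto (fun n => lamn n i) atTop (𝓝 (lam i))) :
    HasSum lam 2 := by
  set g : ℕ → ℝ := fun i => B ^ 2 / ((i : ℝ) + 1) ^ 2 with hgdef
  have hb : ∀ n i, lamn n i ≤ g i := by
    intro n i
    have hpos : (0 : ℝ) < (i : ℝ) + 1 := by positivity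
    have h1 : ((i : ℝ) + 1) * Real.sqrt (lamn n i) ≤ B := by
      have hs : ∑ j ∈ Finset.range (i + 1), Real.sqrt (lamn n j) ≤ B :=
        le_trans (Summable.sum_le_tsum _ (fun j _ => Real.sqrt_nonneg _) (hsqrt_summable n))
          (hsqrt_bound n)
      calc ((i : ℝ) + 1) * Real.sqrt (lamn n i)
          = ∑ _j ∈ Finset.range (i + 1), Real.sqrt (lamn n i) := by
            simp [Finset.sum_const, mul_comm]
        _ ≤ ∑ j ∈ Finset.range (i + 1), Real.sqrt (lamn n j) := by
            refine Finset.sum_le_sum fun j hj => ?_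
            exact Real.sqrt_le_sqrt (hanti n (Nat.le_of_lt_succ (Finset.mem_range.mp hj)))
        _ ≤ B := hs
    have h2 : Real.sqrt (lamn n i) ≤ B / ((i : ℝ) + 1) := by
      rw [le_div_iff₀ hpos]; linarith [h1]
    have h3 : lamn n i = Real.sqrt (lamn n i) ^ 2 := (Real.sq_sqrt (hnonneg n i)).symm
    rw [h3, hgdef]
    calc Real.sqrt (lamn n i) ^ 2 ≤ (B / ((i : ℝ) + 1)) ^ 2 :=
          pow_le_pow_left₀ (Real.sqrt_nonneg _) h2 2
      _ = B ^ 2 / ((i : ℝ) + 1) ^ 2 := div_pow _ _ _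
  have hgsum : Summable g := by
    have h1 : Summable fun i : ℕ => 1 / ((i : ℝ) + 1) ^ 2 := by
      have := (summable_nat_add_iff 1).mpr
        ((Real.summable_one_div_nat_pow (p := 2)).mpr (by norm_num))
      convert this using 2 with i
      · rfl
      push_cast; ring_nf
    have := h1.mul_left (B ^ 2)
    convert this using 2 with i
    · rfl
    simp [hgdef]; ring
  have htend := tendsto_tsum_of_dominated_convergence hgsum hlim
    (Filter.Eventually.of_forall fun n k => by
      rw [Real.norm_eq_abs, abs_of_nonneg (hnonneg n k)]; exact hb n k)
  have hconst : (fun n => ∑' k, lamn n k) = fun _ => (2 : ℝ) := by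
    funext n; exact (hsum2 n).tsum_eq
  rw [hconst] at htend
  have htsum : ∑' k, lam k = 2 := (tendsto_nhds_unique tendsto_const_nhds htend).symm
  have hlam_nonneg : ∀ i, 0 ≤ lam i := fun i =>
    ge_of_tendsto' (hlim i) fun n => hnonneg n i
  have hlam_le : ∀ i, lam i ≤ g i := fun i =>
    le_of_tendsto (hlim i) (Filter.Eventually.of_forall fun n => hb n i)
  have hlamsum : Summable lam := Summable.of_nonneg_of_le hlam_nonneg hlam_le hgsum
  exact htsum ▸ hlamsum.hasSum
end

section
/- Let (Ω, ℱ, μ) and (Ω', ℱ', μ') be probability spaces equipped with countable families of measurable real-valued functions (ν_i)_{i∈ℕ} and (ν'_i)_{i∈ℕ}, where ℱ is the σ-algebra generated by the ν_i and ℱ' is the σ-algebra generated by the ν'_i. Assume both structures are twin-free and saturated, and that for every n ∈ ℕ the pushforward of μ under ω ↦ (ν_0(ω), …, ν_n(ω)) equals the pushforward of μ' under ω' ↦ (ν'_0(ω'), …, ν'_n(ω')) as Borel measures on ℝ^{n+1} (the finite joint distributions coincide). Then there exists a measurable, measure-preserving map φ : Ω → Ω' such that ν'_i(φ(ω)) =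 ν_i(ω) for every i and μ-almost every ω, and φ is a bijection up to sets of measure 0: there are measurable sets A ⊆ Ω and A' ⊆ Ω' with μ(A) = 1 and μ'(A') = 1 such that φ restricts to a bijection from A onto A'. -/
open MeasureTheory Filter Topology

/-- Joint map of the first `n+1` functions of the family. -/
noncomputable def finTypeMap {Ω : Type*} (ν : ℕ → Ω → ℝ) (n : ℕ) : Ω → (Fin (n + 1) → ℝ) :=
  fun ω i => ν i.val ω

lemma finTypeMap_measurable {Ω : Type*} [MeasurableSpace Ω] {ν : ℕ → Ω → ℝ}
    (hν : ∀ i, Measurable (ν i)) (n : ℕ) : Measurable (finTypeMap ν n) :=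
  measurable_pi_lambda _ fun i => hν i.val

/-- In a second-countable metric space, points whose `ε`-ball is null lie in a null open set. -/
lemma null_of_ball_null {X : Type*} [MetricSpace X] [MeasurableSpace X] [BorelSpace X]
    [SecondCountableTopology X] (κ : Measure X) (ε : ℝ) (hε : 0 < ε) :
    ∃ U : Set X, IsOpen U ∧ κ U = 0 ∧ ∀ x ∉ U, 0 < κ (Metric.ball x ε) := by
  set S : Set (Set X) := {V | IsOpen V ∧ κ V = 0} with hS
  obtain ⟨T, hTc, hTS, hTeq⟩ := TopologicalSpace.isOpen_sUnion_countable S (fun s hs => hs.1)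
  refine ⟨⋃₀ S, isOpen_sUnion (fun s hs => hs.1), ?_, ?_⟩
  · rw [← hTeq, measure_sUnion_null_iff hTc]
    exact fun s hs => (hTS hs).2
  · intro x hx
    rcases eq_zero_or_pos (κ (Metric.ball x ε)) with h | h
    · exact absurd (Set.subset_sUnion_of_mem (show Metric.ball x ε ∈ S from ⟨Metric.isOpen_ball, h⟩)
        (Metric.mem_ball_self hε)) hx
    · exact h

/-- Finite-dimensional cylinder sets. -/
def cylinders {Ω : Type*} (ν : ℕ → Ω → ℝ) : Set (Set Ω) :=
  {s | ∃ (n : ℕ) (B : Set (Fin (n + 1) → ℝ)), MeasurableSet B ∧ s = finTypeMap ν n ⁻¹' B}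

lemma finTypeMap_comp_restrict {Ω : Type*} (ν : ℕ → Ω → ℝ) {m n : ℕ} (h : m ≤ n) (ω : Ω) :
    (fun x : Fin (n + 1) → ℝ => fun i : Fin (m + 1) => x (Fin.castLE (by omega) i))
      (finTypeMap ν n ω) = finTypeMap ν m ω := by
  funext i; simp [finTypeMap, Fin.castLE]

lemma cylinders_pi {Ω : Type*} (ν : ℕ → Ω → ℝ) : IsPiSystem (cylinders ν) := by
  rintro s ⟨m, B, hB, rfl⟩ t ⟨n, C, hC, rfl⟩ -
  have hm : m ≤ max m n := le_max_left m n
  have hn : n ≤ max m n := le_max_right m n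
  set N := max m n
  set rB : (Fin (N + 1) → ℝ) → (Fin (m + 1) → ℝ) :=
    fun x i => x (Fin.castLE (by omega) i) with hrB
  set rC : (Fin (N + 1) → ℝ) → (Fin (n + 1) → ℝ) :=
    fun x i => x (Fin.castLE (by omega) i) with hrC
  have hrBm : Measurable rB := measurable_pi_lambda _ fun i => measurable_pi_apply _
  have hrCm : Measurable rC := measurable_pi_lambda _ fun i => measurable_pi_apply _
  refine ⟨N, rB ⁻¹' B ∩ rC ⁻¹' C, (hrBm hB).inter (hrCm hC), ?_⟩
  ext ω
  have h1 : rB (finTypeMap ν N ω) = finTypeMap ν m ω := finTypeMap_comp_restrict ν hm ω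
  have h2 : rC (finTypeMap ν N ω) = finTypeMap ν n ω := finTypeMap_comp_restrict ν hn ω
  simp [Set.mem_preimage, h1, h2]

lemma cylinders_gen {Ω : Type*} [mΩ : MeasurableSpace Ω] (ν : ℕ → Ω → ℝ)
    (hν : ∀ i, Measurable (ν i))
    (hgen : mΩ = ⨆ i, MeasurableSpace.comap (ν i) (inferInstance : MeasurableSpace ℝ)) :
    mΩ = MeasurableSpace.generateFrom (cylinders ν) := by
  apply le_antisymm
  · rw [hgen]
    refine iSup_le fun i => ?_
    rw [← measurable_iff_comap_le]
    have hT : @Measurable Ω (Fin (i + 1) → ℝ)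
        (MeasurableSpace.generateFrom (cylinders ν)) _ (finTypeMap ν i) := by
      intro B hB
      exact MeasurableSpace.measurableSet_generateFrom ⟨i, B, hB, rfl⟩
    have : ν i = (fun x : Fin (i + 1) → ℝ => x ⟨i, Nat.lt_succ_self i⟩) ∘ finTypeMap ν i := by
      funext ω; simp [finTypeMap]
    rw [this]
    exact (measurable_pi_apply _).comp hT
  · refine MeasurableSpace.generateFrom_le ?_
    rintro s ⟨n, B, hB, rfl⟩
    exact finTypeMap_measurable hν n hB

/-- One-directional construction of the comparison map. -/
lemma exists_phi {Ω Ω' : Type*} [mΩ : MeasurableSpace Ω] [mΩ' : MeasurableSpace Ω']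
    (μ : Measure Ω) (μ' : Measure Ω') [IsProbabilityMeasure μ] [IsProbabilityMeasure μ']
    (ν : ℕ → Ω → ℝ) (ν' : ℕ → Ω' → ℝ)
    (hν : ∀ i, Measurable (ν i)) (hν' : ∀ i, Measurable (ν' i))
    (hgen' : mΩ' = ⨆ i, MeasurableSpace.comap (ν' i) (inferInstance : MeasurableSpace ℝ))
    (hsat' : ∀ q : ℕ → ℝ,
      (∀ (I : Finset ℕ) (ε : ℝ), 0 < ε → 0 < μ' {ω | ∀ i ∈ I, |ν' i ω - q i| < ε}) →
      ∃ ω : Ω', ∀ i, ν' i ω = q i)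
    (hdist : ∀ n : ℕ, μ.map (finTypeMap ν n) = μ'.map (finTypeMap ν' n)) :
    ∃ (φ : Ω → Ω') (A₀ : Set Ω), Measurable φ ∧ MeasurableSet A₀ ∧ μ A₀ = 1 ∧
      ∀ ω ∈ A₀, ∀ i, ν' i (φ ω) = ν i ω := by
  classical
  have hne : Nonempty Ω' := by
    rcases isEmpty_or_nonempty Ω' with h | h
    · have h1 : μ' Set.univ = 1 := measure_univ
      rw [Set.univ_eq_empty_iff.2 h] at h1
      simp at h1
    · exact h
  have hδpos : ∀ k : ℕ, (0 : ℝ) < 1 / (k + 1) := fun k => by positivity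
  choose U hUopen hUnull hUpos using fun n k : ℕ =>
    null_of_ball_null (μ.map (finTypeMap ν n)) (1 / (k + 1)) (hδpos k)
  set A₀ : Set Ω := ⋂ n, ⋂ k, finTypeMap ν n ⁻¹' (U n k)ᶜ with hA₀def
  have hA₀meas : MeasurableSet A₀ :=
    MeasurableSet.iInter fun n => MeasurableSet.iInter fun k =>
      finTypeMap_measurable hν n (hUopen n k).measurableSet.compl
  have hA₀full : μ A₀ = 1 := by
    have hc : μ A₀ᶜ = 0 := by
      rw [hA₀def, Set.compl_iInter]
      refine measure_iUnion_null fun n => ?_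
      rw [Set.compl_iInter]
      refine measure_iUnion_null fun k => ?_
      have : (finTypeMap ν n ⁻¹' (U n k)ᶜ)ᶜ = finTypeMap ν n ⁻¹' (U n k) := by
        simp [Set.preimage_compl]
      rw [this, ← Measure.map_apply (finTypeMap_measurable hν n) (hUopen n k).measurableSet]
      exact hUnull n k
    have := measure_add_measure_compl (μ := μ) hA₀meas
    rw [hc, add_zero, measure_univ] at this
    exact this
  have hwide : ∀ ω ∈ A₀, ∀ (I : Finset ℕ) (ε : ℝ), 0 < ε →
      0 < μ' {ω' | ∀ i ∈ I, |ν' i ω' - ν i ω| < ε} := by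
    intro ω hω I ε hε
    obtain ⟨k, hk⟩ := exists_nat_one_div_lt hε
    set δ : ℝ := 1 / (k + 1) with hδdef
    have hδ : (0:ℝ) < δ := hδpos k
    set n : ℕ := I.sup id with hndef
    have hmemn : ω ∈ finTypeMap ν n ⁻¹' (U n k)ᶜ := by
      rw [hA₀def] at hω
      exact Set.mem_iInter.1 (Set.mem_iInter.1 hω n) k
    have hpos : 0 < (μ.map (finTypeMap ν n)) (Metric.ball (finTypeMap ν n ω) δ) :=
      hUpos n k _ hmemn
    rw [hdist n, Measure.map_apply (finTypeMap_measurable hν' n)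
      Metric.isOpen_ball.measurableSet] at hpos
    refine lt_of_lt_of_le hpos (measure_mono ?_)
    intro ω' hω' i hi
    have hin : i < n + 1 := Nat.lt_succ_of_le (Finset.le_sup (f := id) hi)
    have hd : dist (finTypeMap ν' n ω') (finTypeMap ν n ω) < δ := hω'
    have := (dist_pi_lt_iff hδ).1 hd ⟨i, hin⟩
    rw [Real.dist_eq] at this
    calc |ν' i ω' - ν i ω| < δ := this
      _ < ε := hk
  set φ : Ω → Ω' := fun ω =>
    if h : ω ∈ A₀ then (hsat' (fun i => ν i ω) (hwide ω h)).choose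
    else Classical.arbitrary Ω' with hφdef
  have hφspec : ∀ ω ∈ A₀, ∀ i, ν' i (φ ω) = ν i ω := by
    intro ω hω i
    rw [hφdef]
    simp only [dif_pos hω]
    exact (hsat' (fun i => ν i ω) (hwide ω hω)).choose_spec i
  have hφmeas : Measurable φ := by
    rw [measurable_iff_comap_le, hgen', MeasurableSpace.comap_iSup]
    refine iSup_le fun i => ?_
    rw [MeasurableSpace.comap_comp]
    rw [← measurable_iff_comap_le]
    have : (ν' i ∘ φ) = A₀.piecewise (ν i) (fun _ => ν' i (Classical.arbitrary Ω')) := by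
      funext ω
      by_cases h : ω ∈ A₀
      · rw [Set.piecewise_eq_of_mem _ _ _ h]
        exact hφspec ω h i
      · rw [Set.piecewise_eq_of_notMem _ _ _ h]
        simp only [Function.comp_apply, hφdef, dif_neg h]
    rw [this]
    exact Measurable.piecewise hA₀meas (hν i) measurable_const
  exact ⟨φ, A₀, hφmeas, hA₀meas, hA₀full, hφspec⟩

/-- Measure preservation from agreement of types on a conull set. -/
lemma map_eq_of_full {Ω Ω' : Type*} [mΩ : MeasurableSpace Ω] [mΩ' : MeasurableSpace Ω']
    (μ : Measure Ω) (μ' : Measure Ω') [IsProbabilityMeasure μ] [IsProbabilityMeasure μ']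
    (ν : ℕ → Ω → ℝ) (ν' : ℕ → Ω' → ℝ)
    (hν : ∀ i, Measurable (ν i)) (hν' : ∀ i, Measurable (ν' i))
    (hgen' : mΩ' = ⨆ i, MeasurableSpace.comap (ν' i) (inferInstance : MeasurableSpace ℝ))
    (hdist : ∀ n : ℕ, μ.map (finTypeMap ν n) = μ'.map (finTypeMap ν' n))
    (φ : Ω → Ω') (hφ : Measurable φ) (A₀ : Set Ω) (hA₀c : μ A₀ᶜ = 0)
    (hspec : ∀ ω ∈ A₀, ∀ i, ν' i (φ ω) = ν i ω) :
    μ.map φ = μ' := by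
  haveI : IsProbabilityMeasure (μ.map φ) := Measure.isProbabilityMeasure_map hφ.aemeasurable
  refine ext_of_generate_finite (cylinders ν') (cylinders_gen ν' hν' hgen')
    (cylinders_pi ν') ?_ (by simp)
  rintro s ⟨n, B, hB, rfl⟩
  have hsm : MeasurableSet (finTypeMap ν' n ⁻¹' B) := finTypeMap_measurable hν' n hB
  have hinter : φ ⁻¹' (finTypeMap ν' n ⁻¹' B) ∩ A₀ = finTypeMap ν n ⁻¹' B ∩ A₀ := by
    ext ω
    simp only [Set.mem_inter_iff, Set.mem_preimage, and_congr_left_iff]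
    intro hω
    have : finTypeMap ν' n (φ ω) = finTypeMap ν n ω := by
      funext i; exact hspec ω hω i.val
    rw [this]
  calc (μ.map φ) (finTypeMap ν' n ⁻¹' B)
      = μ (φ ⁻¹' (finTypeMap ν' n ⁻¹' B)) := Measure.map_apply hφ hsm
    _ = μ (φ ⁻¹' (finTypeMap ν' n ⁻¹' B) ∩ A₀) := (measure_inter_conull hA₀c).symm
    _ = μ (finTypeMap ν n ⁻¹' B ∩ A₀) := by rw [hinter]
    _ = μ (finTypeMap ν n ⁻¹' B) := measure_inter_conull hA₀c
    _ = (μ.map (finTypeMap ν n)) B := (Measure.map_apply (finTypeMap_measurable hν n) hB).symm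
    _ = (μ'.map (finTypeMap ν' n)) B := by rw [hdist n]
    _ = μ' (finTypeMap ν' n ⁻¹' B) := Measure.map_apply (finTypeMap_measurable hν' n) hB

/-- (Uniqueness.)  Two twin-free saturated probability structures whose
σ-algebras are generated by their countable families of measurable real functions and whose
finite joint distributions coincide are isomorphic: there is a measurable measure-preserving
`φ : Ω → Ω'` with `ν'_i ∘ φ = ν_i` a.e. for all `i`, which is a bijection up to null sets. -/
theorem twin_free_saturated_unique
    {Ω Ω' : Type*} [mΩ : MeasurableSpace Ω] [mΩ' : MeasurableSpace Ω']
    (μ : Measure Ω) (μ' : Measure Ω') [IsProbabilityMeasure μ] [IsProbabilityMeasure μ']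
    (ν : ℕ → Ω → ℝ) (ν' : ℕ → Ω' → ℝ)
    (hν : ∀ i, Measurable (ν i)) (hν' : ∀ i, Measurable (ν' i))
    (hgen : mΩ = ⨆ i, MeasurableSpace.comap (ν i) (inferInstance : MeasurableSpace ℝ))
    (hgen' : mΩ' = ⨆ i, MeasurableSpace.comap (ν' i) (inferInstance : MeasurableSpace ℝ))
    (htf : ∀ ω₁ ω₂ : Ω, (∀ i, ν i ω₁ = ν i ω₂) → ω₁ = ω₂)
    (htf' : ∀ ω₁ ω₂ : Ω', (∀ i, ν' i ω₁ = ν' i ω₂) → ω₁ = ω₂)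
    (hsat : ∀ q : ℕ → ℝ,
      (∀ (I : Finset ℕ) (ε : ℝ), 0 < ε → 0 < μ {ω | ∀ i ∈ I, |ν i ω - q i| < ε}) →
      ∃ ω : Ω, ∀ i, ν i ω = q i)
    (hsat' : ∀ q : ℕ → ℝ,
      (∀ (I : Finset ℕ) (ε : ℝ), 0 < ε → 0 < μ' {ω | ∀ i ∈ I, |ν' i ω - q i| < ε}) →
      ∃ ω : Ω', ∀ i, ν' i ω = q i)
    (hdist : ∀ n : ℕ,
      μ.map (fun ω => fun i : Fin (n + 1) => ν i.val ω)
        = μ'.map (fun ω' => fun i : Fin (n + 1) => ν' i.val ω')) :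
    ∃ φ : Ω → Ω', Measurable φ ∧ μ.map φ = μ' ∧
      (∀ᵐ ω ∂μ, ∀ i, ν' i (φ ω) = ν i ω) ∧
      ∃ (A : Set Ω) (A' : Set Ω'), MeasurableSet A ∧ MeasurableSet A' ∧
        μ A = 1 ∧ μ' A' = 1 ∧ Set.BijOn φ A A' := by
  have hdistF : ∀ n, μ.map (finTypeMap ν n) = μ'.map (finTypeMap ν' n) := fun n => hdist n
  have hdistF' : ∀ n, μ'.map (finTypeMap ν' n) = μ.map (finTypeMap ν n) :=
    fun n => (hdistF n).symm
  obtain ⟨φ, A₀, hφm, hA₀m, hA₀1, hφspec⟩ := exists_phi μ μ' ν ν' hν hν' hgen' hsat' hdistF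
  obtain ⟨ψ, B₀, hψm, hB₀m, hB₀1, hψspec⟩ := exists_phi μ' μ ν' ν hν' hν hgen hsat hdistF'
  have hA₀c : μ A₀ᶜ = 0 := by
    have := measure_add_measure_compl (μ := μ) hA₀m
    rw [hA₀1, measure_univ] at this
    exact (ENNReal.add_right_inj ENNReal.one_ne_top).mp (by rw [this, add_zero])
  have hB₀c : μ' B₀ᶜ = 0 := by
    have := measure_add_measure_compl (μ := μ') hB₀m
    rw [hB₀1, measure_univ] at this
    exact (ENNReal.add_right_inj ENNReal.one_ne_top).mp (by rw [this, add_zero])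
  have hφmap : μ.map φ = μ' :=
    map_eq_of_full μ μ' ν ν' hν hν' hgen' hdistF φ hφm A₀ hA₀c hφspec
  have hψmap : μ'.map ψ = μ :=
    map_eq_of_full μ' μ ν' ν hν' hν hgen hdistF' ψ hψm B₀ hB₀c hψspec
  refine ⟨φ, hφm, hφmap, ?_, ?_⟩
  · rw [ae_iff]
    refine measure_mono_null ?_ hA₀c
    intro ω h
    simp only [Set.mem_setOf_eq] at h
    simp only [Set.mem_compl_iff]
    intro hω
    exact h (hφspec ω hω)
  · set A : Set Ω := A₀ ∩ φ ⁻¹' B₀ with hAdef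
    set A' : Set Ω' := B₀ ∩ ψ ⁻¹' A₀ with hA'def
    have hAm : MeasurableSet A := hA₀m.inter (hφm hB₀m)
    have hA'm : MeasurableSet A' := hB₀m.inter (hψm hA₀m)
    have hφB₀ : μ (φ ⁻¹' B₀)ᶜ = 0 := by
      have : (φ ⁻¹' B₀)ᶜ = φ ⁻¹' B₀ᶜ := by simp [Set.preimage_compl]
      rw [this, ← Measure.map_apply hφm hB₀m.compl, hφmap]
      exact hB₀c
    have hψA₀ : μ' (ψ ⁻¹' A₀)ᶜ = 0 := by
      have : (ψ ⁻¹' A₀)ᶜ = ψ ⁻¹' A₀ᶜ := by simp [Set.preimage_compl]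
      rw [this, ← Measure.map_apply hψm hA₀m.compl, hψmap]
      exact hA₀c
    have hAc : μ Aᶜ = 0 := by
      rw [hAdef, Set.compl_inter]
      exact measure_union_null hA₀c hφB₀
    have hA'c : μ' A'ᶜ = 0 := by
      rw [hA'def, Set.compl_inter]
      exact measure_union_null hB₀c hψA₀
    have hA1 : μ A = 1 := by
      have := measure_add_measure_compl (μ := μ) hAm
      rw [hAc, add_zero, measure_univ] at this
      exact this
    have hA'1 : μ' A' = 1 := by
      have := measure_add_measure_compl (μ := μ') hA'm
      rw [hA'c, add_zero, measure_univ] at this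
      exact this
    have hψφ : ∀ ω ∈ A, ψ (φ ω) = ω := by
      rintro ω ⟨h1, h2⟩
      refine htf _ _ fun i => ?_
      rw [hψspec (φ ω) h2 i, hφspec ω h1 i]
    have hφψ : ∀ ω' ∈ A', φ (ψ ω') = ω' := by
      rintro ω' ⟨h1, h2⟩
      refine htf' _ _ fun i => ?_
      rw [hφspec (ψ ω') h2 i, hψspec ω' h1 i]
    refine ⟨A, A', hAm, hA'm, hA1, hA'1, ?_, ?_, ?_⟩
    · rintro ω ⟨h1, h2⟩
      exact ⟨h2, by rw [Set.mem_preimage, hψφ ω ⟨h1, h2⟩]; exact h1⟩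
    · intro ω₁ h₁ ω₂ h₂ heq
      rw [← hψφ ω₁ h₁, heq, hψφ ω₂ h₂]
    · rintro ω' ⟨h1, h2⟩
      refine ⟨ψ ω', ⟨h2, ?_⟩, hφψ ω' ⟨h1, h2⟩⟩
      rw [Set.mem_preimage, hφψ ω' ⟨h1, h2⟩]
      exact h1
end
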